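/- Let H be a quasi-Hopf algebra over k (with all the data and axioms listed in the context). Then for every a ∈ H the following two identities hold in H⊗H (with Δ(a) = a₍₁₎ ⊗ a₍₂₎ in sumless Sweedler notation): (1 ⊗ S⁻¹(a₍₂₎))·q^R·Δ(a₍₁₎) = (a ⊗ 1)·q^R, and Δ(a₍₁₎)·p^R·(1 ⊗ S(a₍₂₎)) = p^R·(a ⊗ 1). -/

import Mathlib

/-!
Write `f(u ⊗ v) = u·β·S(v)`, so that `p^R = (id ⊗ f)(Φ)`. The map `f` satisfies
`f((q ⊗ r)·t) = q·f(t)·S(r)`, and by the antipode axiom `f(t·Δ(y)) = ε(y)·f(t)`.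
The first property moves `Δ(a₍₁₎)` and `1 ⊗ S(a₍₂₎)` inside:
`Δ(a₍₁₎)·p^R·(1 ⊗ S(a₍₂₎)) = (id ⊗ f)((Δ ⊗ id)Δ(a)·Φ)`. Quasi-coassociativity rewrites the
argument as `Φ·(id ⊗ Δ)Δ(a)`, and the second property collapses `(id ⊗ Δ)(a₍₁₎ ⊗ a₍₂₎)` to
`a₍₁₎ε(a₍₂₎) ⊗ 1 = a ⊗ 1`. The identity for `q^R = (id ⊗ g)(Φ⁻¹)`, with
`g(u ⊗ v) = S⁻¹(α·v)·u`, is the mirror image, using the other antipode axiom.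
-/

open scoped TensorProduct

section QuasiHopf

variable (k H : Type) [Field k] [Ring H] [Algebra k H]

/-- The trilinear map `H ⊗ (H ⊗ H) → H`, `x ⊗ y ⊗ z ↦ f(x) * u * (g(y) * v * h(z))`,
used to formulate the zig-zag axioms of a quasi-Hopf algebra. -/
noncomputable def triMap (f g h : H →ₗ[k] H) (u v : H) :
    H ⊗[k] (H ⊗[k] H) →ₗ[k] H :=
  TensorProduct.lift
    ((LinearMap.lcomp k H
        (TensorProduct.lift
          (((LinearMap.mul k H) ∘ₗ (LinearMap.mulRight k v) ∘ₗ g).compl₂ h)))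
      ∘ₗ (LinearMap.mul k H) ∘ₗ (LinearMap.mulRight k u) ∘ₗ f)

/-- A (finite-dimensional) quasi-Hopf algebra structure on the `k`-algebra `H`:
comultiplication `comul` (an algebra map), counit, an invertible coassociator
`assoc = Φ` (with inverse `assocInv = Ψ`) satisfying quasi-coassociativity, the pentagon
identity, and the counit axiom, together with an invertible antipode `S` (an algebra
anti-homomorphism, with inverse `Sinv`) and evaluation/coevaluation elements
`alpha`, `beta` satisfying the antipode and zig-zag axioms. -/
structure QuasiHopfAlg : Type where
  comul : H →ₐ[k] H ⊗[k] H
  counit : H →ₐ[k] k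
  counit_comul_left : ∀ h : H,
    (TensorProduct.lid k H) ((LinearMap.rTensor H counit.toLinearMap) (comul h)) = h
  counit_comul_right : ∀ h : H,
    (TensorProduct.rid k H) ((LinearMap.lTensor H counit.toLinearMap) (comul h)) = h
  assoc : H ⊗[k] (H ⊗[k] H)
  assocInv : H ⊗[k] (H ⊗[k] H)
  assoc_mul_inv : assoc * assocInv = 1
  inv_mul_assoc : assocInv * assoc = 1
  quasi_coassoc : ∀ h : H,
    (Algebra.TensorProduct.assoc k k k H H H)
        ((Algebra.TensorProduct.map comul (AlgHom.id k H)) (comul h)) * assoc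
      = assoc * ((Algebra.TensorProduct.map (AlgHom.id k H) comul) (comul h))
  pentagon :
      (Algebra.TensorProduct.map (AlgHom.id k H)
          (Algebra.TensorProduct.map (AlgHom.id k H)
            (Algebra.TensorProduct.includeLeft (R := k) (S := k) (B := H)))) assoc
        * (Algebra.TensorProduct.map (AlgHom.id k H)
            ((Algebra.TensorProduct.assoc k k k H H H).toAlgHom.comp
              (Algebra.TensorProduct.map comul (AlgHom.id k H)))) assoc
        * (Algebra.TensorProduct.includeRight (R := k) (A := H)) assoc
      = (Algebra.TensorProduct.assoc k k k H H (H ⊗[k] H))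
          ((Algebra.TensorProduct.map comul (AlgHom.id k (H ⊗[k] H))) assoc)
        * (Algebra.TensorProduct.map (AlgHom.id k H)
            (Algebra.TensorProduct.map (AlgHom.id k H) comul)) assoc
  counit_assoc :
    (Algebra.TensorProduct.map (AlgHom.id k H)
        ((Algebra.TensorProduct.lid k H).toAlgHom.comp
          (Algebra.TensorProduct.map counit (AlgHom.id k H)))) assoc = 1
  S : H →ₗ[k] H
  Sinv : H →ₗ[k] H
  Sinv_S : ∀ h : H, Sinv (S h) = h
  S_Sinv : ∀ h : H, S (Sinv h) = h
  S_one : S 1 = 1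
  S_mul : ∀ x y : H, S (x * y) = S y * S x
  alpha : H
  beta : H
  antipode_left : ∀ h : H,
    TensorProduct.lift ((LinearMap.mul k H) ∘ₗ (LinearMap.mulRight k alpha) ∘ₗ S)
        (comul h) = counit h • alpha
  antipode_right : ∀ h : H,
    TensorProduct.lift (((LinearMap.mul k H) ∘ₗ (LinearMap.mulRight k beta)).compl₂ S)
        (comul h) = counit h • beta
  zig : triMap k H LinearMap.id S LinearMap.id beta alpha assoc = 1
  zag : triMap k H S LinearMap.id S alpha beta assocInv = 1

variable {k H}

/-- The element `q^R = Ψ₁ ⊗ S⁻¹(α·Ψ₃)·Ψ₂` of `H ⊗ H`. -/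
noncomputable def qR (Q : QuasiHopfAlg k H) : H ⊗[k] H :=
  (LinearMap.lTensor H
      (TensorProduct.lift
        (((LinearMap.mul k H) ∘ₗ Q.Sinv ∘ₗ (LinearMap.mulLeft k Q.alpha)).flip)))
    Q.assocInv

/-- The element `p^R = Φ₁ ⊗ Φ₂·β·S(Φ₃)` of `H ⊗ H`. -/
noncomputable def pR (Q : QuasiHopfAlg k H) : H ⊗[k] H :=
  (LinearMap.lTensor H
      (TensorProduct.lift
        (((LinearMap.mul k H) ∘ₗ (LinearMap.mulRight k Q.beta)).compl₂ Q.S)))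
    Q.assoc

/-- The element `q^L = S(Φ₁)·α·Φ₂ ⊗ Φ₃` of `H ⊗ H`. -/
noncomputable def qL (Q : QuasiHopfAlg k H) : H ⊗[k] H :=
  (LinearMap.rTensor H
      (TensorProduct.lift
        ((LinearMap.mul k H) ∘ₗ (LinearMap.mulRight k Q.alpha) ∘ₗ Q.S)))
    ((TensorProduct.assoc k H H H).symm Q.assoc)

/-- The element `p^L = Ψ₂·S⁻¹(Ψ₁·β) ⊗ Ψ₃` of `H ⊗ H`. -/
noncomputable def pL (Q : QuasiHopfAlg k H) : H ⊗[k] H :=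
  (LinearMap.rTensor H
      (TensorProduct.lift
        (((LinearMap.mul k H).flip) ∘ₗ Q.Sinv ∘ₗ (LinearMap.mulRight k Q.beta))))
    ((TensorProduct.assoc k H H H).symm Q.assocInv)

end QuasiHopf

variable {k H : Type} [Field k] [Ring H] [Algebra k H]

/-- The linear map `H ⊗ H → H ⊗ H` sending (a sum of) `x ⊗ y` to `Δ(x)·p^R·(1 ⊗ S(y))`. -/
noncomputable def zigzagR1 (Q : QuasiHopfAlg k H) : H ⊗[k] H →ₗ[k] H ⊗[k] H :=
  TensorProduct.lift
    (((LinearMap.mul k (H ⊗[k] H)) ∘ₗ (LinearMap.mulRight k (pR Q))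
        ∘ₗ Q.comul.toLinearMap).compl₂
      ((TensorProduct.mk k H H 1) ∘ₗ Q.S))

/-- The linear map `H ⊗ H → H ⊗ H` sending (a sum of) `x ⊗ y` to `(1 ⊗ S⁻¹(y))·q^R·Δ(x)`. -/
noncomputable def zigzagR2 (Q : QuasiHopfAlg k H) : H ⊗[k] H →ₗ[k] H ⊗[k] H :=
  TensorProduct.lift
    ((((LinearMap.mul k (H ⊗[k] H)).flip) ∘ₗ (LinearMap.mulLeft k (qR Q))
        ∘ₗ Q.comul.toLinearMap).compl₂
      ((TensorProduct.mk k H H 1) ∘ₗ Q.Sinv))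

namespace QuasiHopfAlg

variable (Q : QuasiHopfAlg k H)

lemma Sinv_mul (x y : H) : Q.Sinv (x * y) = Q.Sinv y * Q.Sinv x := by
  rw [← Q.S_Sinv x, ← Q.S_Sinv y, ← Q.S_mul, Q.Sinv_S, Q.Sinv_S, Q.Sinv_S]

lemma assocInv_mul_comul_comul (a : H) :
    Q.assocInv *
        (Algebra.TensorProduct.assoc k k k H H H)
          ((Algebra.TensorProduct.map Q.comul (AlgHom.id k H)) (Q.comul a))
      = (Algebra.TensorProduct.map (AlgHom.id k H) Q.comul) (Q.comul a) * Q.assocInv := by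
  set A := (Algebra.TensorProduct.assoc k k k H H H)
    ((Algebra.TensorProduct.map Q.comul (AlgHom.id k H)) (Q.comul a))
  set B := (Algebra.TensorProduct.map (AlgHom.id k H) Q.comul) (Q.comul a)
  calc Q.assocInv * A = Q.assocInv * A * (Q.assoc * Q.assocInv) := by
        rw [Q.assoc_mul_inv, mul_one]
    _ = Q.assocInv * (A * Q.assoc) * Q.assocInv := by simp only [mul_assoc]
    _ = Q.assocInv * (Q.assoc * B) * Q.assocInv := by rw [Q.quasi_coassoc]
    _ = B * Q.assocInv := by rw [← mul_assoc Q.assocInv, Q.inv_mul_assoc, one_mul]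

noncomputable def pRMap : H ⊗[k] H →ₗ[k] H :=
  TensorProduct.lift (((LinearMap.mul k H) ∘ₗ (LinearMap.mulRight k Q.beta)).compl₂ Q.S)

noncomputable def qRMap : H ⊗[k] H →ₗ[k] H :=
  TensorProduct.lift (((LinearMap.mul k H) ∘ₗ Q.Sinv ∘ₗ (LinearMap.mulLeft k Q.alpha)).flip)

lemma pR_eq_lTensor_pRMap : pR Q = LinearMap.lTensor H Q.pRMap Q.assoc := rfl

lemma qR_eq_lTensor_qRMap : qR Q = LinearMap.lTensor H Q.qRMap Q.assocInv := rfl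

@[simp]
lemma pRMap_tmul (u v : H) : Q.pRMap (u ⊗ₜ[k] v) = u * Q.beta * Q.S v := by
  simp [pRMap]

@[simp]
lemma qRMap_tmul (u v : H) : Q.qRMap (u ⊗ₜ[k] v) = Q.Sinv (Q.alpha * v) * u := by
  simp [qRMap]

lemma pRMap_tmul_mul (q r : H) (t : H ⊗[k] H) :
    Q.pRMap ((q ⊗ₜ[k] r) * t) = q * Q.pRMap t * Q.S r := by
  induction t using TensorProduct.induction_on with
  | zero => simp
  | tmul u v => simp [Q.S_mul, mul_assoc]
  | add s t hs ht => simp [mul_add, add_mul, hs, ht]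

lemma qRMap_mul_tmul (q r : H) (t : H ⊗[k] H) :
    Q.qRMap (t * (q ⊗ₜ[k] r)) = Q.Sinv r * Q.qRMap t * q := by
  induction t using TensorProduct.induction_on with
  | zero => simp
  | tmul u v => simp [Q.Sinv_mul, mul_assoc]
  | add s t hs ht => simp [mul_add, add_mul, hs, ht]

lemma S_qRMap (t : H ⊗[k] H) :
    Q.S (Q.qRMap t) =
      TensorProduct.lift
        ((LinearMap.mul k H) ∘ₗ (LinearMap.mulRight k Q.alpha) ∘ₗ Q.S) t := by
  induction t using TensorProduct.induction_on with
  | zero => simp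
  | tmul u v => simp [Q.S_mul, Q.S_Sinv, mul_assoc]
  | add s t hs ht => simp [hs, ht]

lemma pRMap_comul (y : H) : Q.pRMap (Q.comul y) = Q.counit y • Q.beta :=
  Q.antipode_right y

lemma qRMap_comul (y : H) : Q.qRMap (Q.comul y) = Q.counit y • Q.Sinv Q.alpha := by
  rw [← Q.Sinv_S (Q.qRMap _), S_qRMap, antipode_left, map_smul]

lemma pRMap_mul_comul (t : H ⊗[k] H) (y : H) :
    Q.pRMap (t * Q.comul y) = Q.counit y • Q.pRMap t := by
  induction t using TensorProduct.induction_on with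
  | zero => simp
  | tmul q r => rw [pRMap_tmul_mul, pRMap_comul, pRMap_tmul, mul_smul_comm, smul_mul_assoc]
  | add s t hs ht => simp [add_mul, hs, ht]

lemma qRMap_comul_mul (t : H ⊗[k] H) (y : H) :
    Q.qRMap (Q.comul y * t) = Q.counit y • Q.qRMap t := by
  induction t using TensorProduct.induction_on with
  | zero => simp
  | tmul q r =>
    rw [qRMap_mul_tmul, qRMap_comul, qRMap_tmul, mul_smul_comm, smul_mul_assoc, Q.Sinv_mul,
      mul_assoc]
  | add s t hs ht => simp [mul_add, hs, ht]

lemma mul_lTensor_pRMap_mul_tmul_S (v : H ⊗[k] H) (w : H ⊗[k] (H ⊗[k] H)) (y : H) :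
    v * LinearMap.lTensor H Q.pRMap w * ((1 : H) ⊗ₜ[k] Q.S y) =
      LinearMap.lTensor H Q.pRMap
        ((Algebra.TensorProduct.assoc k k k H H H) (v ⊗ₜ[k] y) * w) := by
  induction v using TensorProduct.induction_on with
  | zero => simp
  | tmul p q =>
    induction w using TensorProduct.induction_on with
    | zero => simp
    | tmul a t => simp [pRMap_tmul_mul, mul_assoc]
    | add s t hs ht => simp [mul_add, add_mul, hs, ht]
  | add s t hs ht => simp only [add_mul, TensorProduct.add_tmul, map_add, hs, ht]

lemma tmul_Sinv_mul_lTensor_qRMap_mul (v : H ⊗[k] H) (w : H ⊗[k] (H ⊗[k] H)) (y : H) :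
    ((1 : H) ⊗ₜ[k] Q.Sinv y) * (LinearMap.lTensor H Q.qRMap w * v) =
      LinearMap.lTensor H Q.qRMap
        (w * (Algebra.TensorProduct.assoc k k k H H H) (v ⊗ₜ[k] y)) := by
  induction v using TensorProduct.induction_on with
  | zero => simp
  | tmul p q =>
    induction w using TensorProduct.induction_on with
    | zero => simp
    | tmul a t => simp [qRMap_mul_tmul, mul_assoc]
    | add s t hs ht => simp [mul_add, add_mul, hs, ht]
  | add s t hs ht => simp only [mul_add, TensorProduct.add_tmul, map_add, hs, ht]

lemma zigzagR1_eq_lTensor_pRMap (u : H ⊗[k] H) :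
    zigzagR1 Q u =
      LinearMap.lTensor H Q.pRMap
        ((Algebra.TensorProduct.assoc k k k H H H)
            ((Algebra.TensorProduct.map Q.comul (AlgHom.id k H)) u) * Q.assoc) := by
  induction u using TensorProduct.induction_on with
  | zero => simp
  | tmul x y =>
    have : zigzagR1 Q (x ⊗ₜ[k] y) = Q.comul x * pR Q * ((1 : H) ⊗ₜ[k] Q.S y) := by
      simp [zigzagR1]
    simp [this, pR_eq_lTensor_pRMap, mul_lTensor_pRMap_mul_tmul_S]
  | add s t hs ht => simp [add_mul, hs, ht]

lemma zigzagR2_eq_lTensor_qRMap (u : H ⊗[k] H) :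
    zigzagR2 Q u =
      LinearMap.lTensor H Q.qRMap
        (Q.assocInv *
          (Algebra.TensorProduct.assoc k k k H H H)
            ((Algebra.TensorProduct.map Q.comul (AlgHom.id k H)) u)) := by
  induction u using TensorProduct.induction_on with
  | zero => simp
  | tmul x y =>
    have : zigzagR2 Q (x ⊗ₜ[k] y) = ((1 : H) ⊗ₜ[k] Q.Sinv y) * (qR Q * Q.comul x) := by
      simp [zigzagR2]
    simp [this, qR_eq_lTensor_qRMap, tmul_Sinv_mul_lTensor_qRMap_mul]
  | add s t hs ht => simp [mul_add, hs, ht]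

lemma lTensor_pRMap_mul_tmul_comul (w : H ⊗[k] (H ⊗[k] H)) (x y : H) :
    LinearMap.lTensor H Q.pRMap (w * (x ⊗ₜ[k] Q.comul y)) =
      Q.counit y • (LinearMap.lTensor H Q.pRMap w * (x ⊗ₜ[k] (1 : H))) := by
  induction w using TensorProduct.induction_on with
  | zero => simp
  | tmul a t => simp [pRMap_mul_comul, TensorProduct.tmul_smul, TensorProduct.smul_tmul']
  | add s t hs ht => simp [add_mul, hs, ht]

lemma lTensor_qRMap_tmul_comul_mul (w : H ⊗[k] (H ⊗[k] H)) (x y : H) :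
    LinearMap.lTensor H Q.qRMap ((x ⊗ₜ[k] Q.comul y) * w) =
      Q.counit y • ((x ⊗ₜ[k] (1 : H)) * LinearMap.lTensor H Q.qRMap w) := by
  induction w using TensorProduct.induction_on with
  | zero => simp
  | tmul a t => simp [qRMap_comul_mul, TensorProduct.tmul_smul, TensorProduct.smul_tmul']
  | add s t hs ht => simp [mul_add, hs, ht]

lemma lTensor_pRMap_assoc_mul_map_comul (u : H ⊗[k] H) :
    LinearMap.lTensor H Q.pRMap
        (Q.assoc * (Algebra.TensorProduct.map (AlgHom.id k H) Q.comul) u) =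
      pR Q *
        ((TensorProduct.rid k H (LinearMap.lTensor H Q.counit.toLinearMap u)) ⊗ₜ[k] (1 : H)) := by
  induction u using TensorProduct.induction_on with
  | zero => simp
  | tmul x y =>
    simp only [Algebra.TensorProduct.map_tmul, AlgHom.coe_id, id_eq,
      lTensor_pRMap_mul_tmul_comul, pR_eq_lTensor_pRMap, LinearMap.lTensor_tmul,
      TensorProduct.rid_tmul, AlgHom.toLinearMap_apply]
    rw [← TensorProduct.smul_tmul', mul_smul_comm]
  | add s t hs ht => simp [mul_add, TensorProduct.add_tmul, hs, ht]

lemma lTensor_qRMap_map_comul_mul_assocInv (u : H ⊗[k] H) :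
    LinearMap.lTensor H Q.qRMap
        ((Algebra.TensorProduct.map (AlgHom.id k H) Q.comul) u * Q.assocInv) =
      ((TensorProduct.rid k H (LinearMap.lTensor H Q.counit.toLinearMap u)) ⊗ₜ[k] (1 : H)) *
        qR Q := by
  induction u using TensorProduct.induction_on with
  | zero => simp
  | tmul x y =>
    simp only [Algebra.TensorProduct.map_tmul, AlgHom.coe_id, id_eq,
      lTensor_qRMap_tmul_comul_mul, qR_eq_lTensor_qRMap, LinearMap.lTensor_tmul,
      TensorProduct.rid_tmul, AlgHom.toLinearMap_apply]
    rw [← TensorProduct.smul_tmul', smul_mul_assoc]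
  | add s t hs ht => simp [add_mul, TensorProduct.add_tmul, hs, ht]

end QuasiHopfAlg

theorem stmt9_general (k H : Type) [Field k] [Ring H] [Algebra k H]
    (Q : QuasiHopfAlg k H) :
    ∀ a : H,
      zigzagR2 Q (Q.comul a) = (a ⊗ₜ[k] (1 : H)) * qR Q ∧
      zigzagR1 Q (Q.comul a) = pR Q * (a ⊗ₜ[k] (1 : H)) := by
  intro a
  constructor
  · rw [Q.zigzagR2_eq_lTensor_qRMap, Q.assocInv_mul_comul_comul,
      Q.lTensor_qRMap_map_comul_mul_assocInv, Q.counit_comul_right]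
  · rw [Q.zigzagR1_eq_lTensor_pRMap, Q.quasi_coassoc, Q.lTensor_pRMap_assoc_mul_map_comul,
      Q.counit_comul_right]

/-- For all `a ∈ H`: `(1 ⊗ S⁻¹(a₍₂₎))·q^R·Δ(a₍₁₎) = (a ⊗ 1)·q^R` and
`Δ(a₍₁₎)·p^R·(1 ⊗ S(a₍₂₎)) = p^R·(a ⊗ 1)`. -/
theorem stmt9 (k H : Type) [Field k] [Ring H] [Algebra k H] [Module.Finite k H]
    (Q : QuasiHopfAlg k H) :
    ∀ a : H,
      zigzagR2 Q (Q.comul a) = (a ⊗ₜ[k] (1 : H)) * qR Q ∧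
      zigzagR1 Q (Q.comul a) = pR Q * (a ⊗ₜ[k] (1 : H)) :=
  stmt9_general k H Q
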